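/- Let s ∈ (0,1/2) and ν ≥ 0 be real. Then the power series Σ_{j=1}^{∞} (Γ(sj+1) Γ(sj+ν+1) sin(sπj)/j!) (−1)^{j−1} z^j has infinite radius of convergence; that is, for every real R > 0 the series Σ_{j=1}^{∞} (Γ(sj+1) Γ(sj+ν+1) |sin(sπj)| / j!) R^j converges. -/
import Mathlib

set_option maxHeartbeats 1000000

open Real Filter

/-- Log-convexity bound: `Γ(x+t) ≤ Γ(x) * x^t` for `x ≥ 1`, `t ∈ [0,1]`. -/
lemma gamma_add_le_aux (x t : ℝ) (hx : 1 ≤ x) (ht0 : 0 ≤ t) (ht1 : t ≤ 1) :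
    Real.Gamma (x + t) ≤ Real.Gamma x * x ^ t := by
  have hx0 : (0:ℝ) < x := by linarith
  have hΓx : 0 < Real.Gamma x := Real.Gamma_pos_of_pos hx0
  have hΓxt : 0 < Real.Gamma (x + t) := Real.Gamma_pos_of_pos (by linarith)
  have hconv := Real.convexOn_log_Gamma
  have h := hconv.2 (Set.mem_Ioi.mpr hx0) (Set.mem_Ioi.mpr (by linarith : (0:ℝ) < x + 1))
      (by linarith : (0:ℝ) ≤ 1 - t) ht0 (by ring)
  have hcomb : (1 - t) • x + t • (x + 1) = x + t := by simp [smul_eq_mul]; ring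
  rw [hcomb] at h
  simp only [Function.comp_apply, smul_eq_mul] at h
  have hΓ1 : Real.Gamma (x + 1) = x * Real.Gamma x := Real.Gamma_add_one (ne_of_gt hx0)
  rw [hΓ1, Real.log_mul (ne_of_gt hx0) (ne_of_gt hΓx)] at h
  have h2 : Real.log (Real.Gamma (x + t)) ≤ Real.log (Real.Gamma x) + t * Real.log x := by
    nlinarith [h]
  calc Real.Gamma (x + t) = Real.exp (Real.log (Real.Gamma (x + t))) := (Real.exp_log hΓxt).symm
    _ ≤ Real.exp (Real.log (Real.Gamma x) + t * Real.log x) := Real.exp_le_exp.mpr h2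
    _ = Real.Gamma x * x ^ t := by
        rw [Real.exp_add, Real.exp_log hΓx, Real.rpow_def_of_pos hx0, mul_comm t (Real.log x)]

theorem stmt_13 (s ν : ℝ) (hs0 : 0 < s) (hs2 : s < 1 / 2) (hν : 0 ≤ ν) :
    ∀ R : ℝ, 0 < R →
      Summable (fun j : ℕ =>
        Real.Gamma (s * ((j : ℝ) + 1) + 1) * Real.Gamma (s * ((j : ℝ) + 1) + ν + 1) *
          |Real.sin (s * Real.pi * ((j : ℝ) + 1))| / (Nat.factorial (j + 1) : ℝ) *
          R ^ (j + 1)) := by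
  intro R hR
  have hs1 : s ≤ 1 := by linarith
  set g : ℕ → ℝ := fun j =>
    Real.Gamma (s * ((j : ℝ) + 1) + 1) * Real.Gamma (s * ((j : ℝ) + 1) + ν + 1) /
      (Nat.factorial (j + 1) : ℝ) * R ^ (j + 1) with hgdef
  have hgpos : ∀ j : ℕ, 0 < g j := by
    intro j
    have h1 : 0 < Real.Gamma (s * ((j : ℝ) + 1) + 1) :=
      Real.Gamma_pos_of_pos (by positivity)
    have h2 : 0 < Real.Gamma (s * ((j : ℝ) + 1) + ν + 1) :=
      Real.Gamma_pos_of_pos (by positivity)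
    have h3 : (0:ℝ) < (Nat.factorial (j + 1) : ℝ) := by positivity
    positivity
  have hg : Summable g := by
    apply summable_of_ratio_norm_eventually_le (r := 1/2) (by norm_num)
    -- eventual smallness of (J+ν+2)^(2s) * R ≤ 1/2 * (J+2)
    have htend : Tendsto (fun J : ℝ => R * (ν + 2) * (J + (ν + 2)) ^ (2*s - 1)) atTop (nhds 0) := by
      have h1 : Tendsto (fun J : ℝ => J + (ν + 2)) atTop atTop :=
        tendsto_atTop_add_const_right _ _ tendsto_id
      have h2 : Tendsto (fun y : ℝ => y ^ (2*s - 1)) atTop (nhds 0) := by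
        have := tendsto_rpow_neg_atTop (show (0:ℝ) < 1 - 2*s by linarith)
        convert this using 2
        ring
      have := (h2.comp h1).const_mul (R * (ν + 2))
      simpa using this
    have hev : ∀ᶠ J : ℝ in atTop, R * (ν + 2) * (J + (ν + 2)) ^ (2*s - 1) ≤ 1/2 := by
      filter_upwards [htend.eventually_le_const (by norm_num : (0:ℝ) < 1/2)] with J hJ
      linarith [hJ]
    have hevN : ∀ᶠ j : ℕ in atTop, R * (ν + 2) * ((j:ℝ) + (ν + 2)) ^ (2*s - 1) ≤ 1/2 :=
      tendsto_natCast_atTop_atTop.eventually hev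
    filter_upwards [hevN] with j hj
    set J : ℝ := (j : ℝ) with hJdef
    have hJ0 : 0 ≤ J := Nat.cast_nonneg j
    set x1 : ℝ := s * (J + 1) + 1 with hx1
    set x2 : ℝ := s * (J + 1) + ν + 1 with hx2
    have hx1ge : 1 ≤ x1 := by nlinarith
    have hx2ge : 1 ≤ x2 := by nlinarith
    have hΓ1 : 0 < Real.Gamma x1 := Real.Gamma_pos_of_pos (by linarith)
    have hΓ2 : 0 < Real.Gamma x2 := Real.Gamma_pos_of_pos (by linarith)
    -- Gamma step bounds
    have hA : Real.Gamma (x1 + s) ≤ Real.Gamma x1 * x1 ^ s :=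
      gamma_add_le_aux x1 s hx1ge hs0.le hs1
    have hB : Real.Gamma (x2 + s) ≤ Real.Gamma x2 * x2 ^ s :=
      gamma_add_le_aux x2 s hx2ge hs0.le hs1
    -- bound the rpow product
    have hy : (0:ℝ) < J + ν + 2 := by linarith
    have hb1 : x1 ≤ J + ν + 2 := by nlinarith
    have hb2 : x2 ≤ J + ν + 2 := by nlinarith
    have hprod : x1 ^ s * x2 ^ s ≤ (J + ν + 2) ^ (2*s) := by
      have h1 : x1 ^ s * x2 ^ s = (x1 * x2) ^ s :=
        (Real.mul_rpow (by linarith) (by linarith)).symm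
      have h2 : x1 * x2 ≤ (J + ν + 2) ^ (2:ℝ) := by
        rw [Real.rpow_two]
        nlinarith
      calc x1 ^ s * x2 ^ s = (x1 * x2) ^ s := h1
        _ ≤ ((J + ν + 2) ^ (2:ℝ)) ^ s := by
            apply Real.rpow_le_rpow (by nlinarith) h2 hs0.le
        _ = (J + ν + 2) ^ (2*s) := by
            rw [← Real.rpow_mul hy.le]
    -- key numeric bound: (J+ν+2)^(2s) * R ≤ 1/2 * (J+2)
    have hkey : (J + ν + 2) ^ (2*s) * R ≤ 1/2 * (J + 2) := by
      have hsplit : (J + ν + 2) ^ (2*s) = (J + ν + 2) ^ (2*s - 1) * (J + ν + 2) := by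
        rw [← Real.rpow_add_one (ne_of_gt hy)]
        ring_nf
      have hle : J + ν + 2 ≤ (ν + 2) * (J + 2) := by nlinarith
      have hrp : (0:ℝ) < (J + ν + 2) ^ (2*s - 1) := Real.rpow_pos_of_pos hy _
      have : (J + ν + 2) ^ (2*s) * R ≤ R * (ν + 2) * ((J + (ν+2)) ^ (2*s - 1)) * (J + 2) := by
        rw [hsplit]
        have heq : J + (ν + 2) = J + ν + 2 := by ring
        rw [heq]
        have hmul := mul_le_mul_of_nonneg_left hle
          (by positivity : (0:ℝ) ≤ R * (J + ν + 2) ^ (2*s - 1))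
        nlinarith [hmul]
      have h2 : R * (ν + 2) * ((J + (ν+2)) ^ (2*s - 1)) * (J + 2) ≤ 1/2 * (J + 2) := by
        have hJ2 : (0:ℝ) < J + 2 := by linarith
        nlinarith [hj]
      linarith
    -- now the ratio estimate
    have hgj : g j = Real.Gamma x1 * Real.Gamma x2 / (Nat.factorial (j + 1) : ℝ) * R ^ (j + 1) := rfl
    have hgj1 : g (j+1) = Real.Gamma (x1 + s) * Real.Gamma (x2 + s) /
        (Nat.factorial (j + 2) : ℝ) * R ^ (j + 2) := by
      simp only [hgdef, hx1, hx2, hJdef]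
      push_cast
      ring_nf
    have hfact : (Nat.factorial (j + 2) : ℝ) = (J + 2) * (Nat.factorial (j + 1) : ℝ) := by
      rw [Nat.factorial_succ]
      push_cast
      ring
    have hfpos : (0:ℝ) < (Nat.factorial (j + 1) : ℝ) := by positivity
    have hΓA : 0 < Real.Gamma (x1 + s) := Real.Gamma_pos_of_pos (by linarith)
    have hΓB : 0 < Real.Gamma (x2 + s) := Real.Gamma_pos_of_pos (by linarith)
    rw [Real.norm_eq_abs, Real.norm_eq_abs, abs_of_pos (hgpos _), abs_of_pos (hgpos _)]
    rw [hgj, hgj1, hfact]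
    have hRp : (0:ℝ) < R ^ (j + 1) := by positivity
    have hJ2 : (0:ℝ) < J + 2 := by linarith
    have hx1p : (0:ℝ) < x1 ^ s := Real.rpow_pos_of_pos (by linarith) _
    have hx2p : (0:ℝ) < x2 ^ s := Real.rpow_pos_of_pos (by linarith) _
    have step1 : Real.Gamma (x1 + s) * Real.Gamma (x2 + s) ≤
        Real.Gamma x1 * Real.Gamma x2 * (x1 ^ s * x2 ^ s) := by
      have := mul_le_mul hA hB hΓB.le (by positivity)
      nlinarith [this]
    have step2 : Real.Gamma x1 * Real.Gamma x2 * (x1 ^ s * x2 ^ s) ≤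
        Real.Gamma x1 * Real.Gamma x2 * (J + ν + 2) ^ (2*s) := by
      have hΓΓ : 0 < Real.Gamma x1 * Real.Gamma x2 := by positivity
      exact mul_le_mul_of_nonneg_left hprod hΓΓ.le
    have key : Real.Gamma (x1 + s) * Real.Gamma (x2 + s) * R ≤
        1/2 * (Real.Gamma x1 * Real.Gamma x2) * (J + 2) := by
      have h3 := le_trans step1 step2
      have h4 := mul_le_mul_of_nonneg_right h3 hR.le
      have h5 := mul_le_mul_of_nonneg_left hkey
        (by positivity : (0:ℝ) ≤ Real.Gamma x1 * Real.Gamma x2)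
      nlinarith [h4, h5]
    calc Real.Gamma (x1 + s) * Real.Gamma (x2 + s) /
          ((J + 2) * (Nat.factorial (j + 1) : ℝ)) * R ^ (j + 2)
        = (Real.Gamma (x1 + s) * Real.Gamma (x2 + s) * R) *
            (R ^ (j + 1) / ((J + 2) * (Nat.factorial (j + 1) : ℝ))) := by ring
      _ ≤ (1/2 * (Real.Gamma x1 * Real.Gamma x2) * (J + 2)) *
            (R ^ (j + 1) / ((J + 2) * (Nat.factorial (j + 1) : ℝ))) := by
          exact mul_le_mul_of_nonneg_right key (by positivity)
      _ = 1 / 2 * (Real.Gamma x1 * Real.Gamma x2 / (Nat.factorial (j + 1) : ℝ) *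
            R ^ (j + 1)) := by
          field_simp
  -- compare with g
  apply hg.of_nonneg_of_le
  · intro j
    have h1 : 0 < Real.Gamma (s * ((j : ℝ) + 1) + 1) := Real.Gamma_pos_of_pos (by positivity)
    have h2 : 0 < Real.Gamma (s * ((j : ℝ) + 1) + ν + 1) := Real.Gamma_pos_of_pos (by positivity)
    positivity
  · intro j
    have h1 : 0 < Real.Gamma (s * ((j : ℝ) + 1) + 1) := Real.Gamma_pos_of_pos (by positivity)
    have h2 : 0 < Real.Gamma (s * ((j : ℝ) + 1) + ν + 1) := Real.Gamma_pos_of_pos (by positivity)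
    have hsin : |Real.sin (s * Real.pi * ((j : ℝ) + 1))| ≤ 1 := abs_sin_le_one _
    have hfpos : (0:ℝ) < (Nat.factorial (j + 1) : ℝ) := by positivity
    have hRp : (0:ℝ) < R ^ (j + 1) := by positivity
    simp only [hgdef]
    have hnum : Real.Gamma (s * ((j : ℝ) + 1) + 1) * Real.Gamma (s * ((j : ℝ) + 1) + ν + 1) *
        |Real.sin (s * Real.pi * ((j : ℝ) + 1))| ≤
        Real.Gamma (s * ((j : ℝ) + 1) + 1) * Real.Gamma (s * ((j : ℝ) + 1) + ν + 1) :=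
      mul_le_of_le_one_right (by positivity) hsin
    exact mul_le_mul_of_nonneg_right
      (div_le_div_of_nonneg_right hnum hfpos.le) hRp.le
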